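/- Define v(n,m,k) = -t(n,m,k)/s(n,m) with s(n,m) = Σ_{i=0}^{m} C(n,i) b^{m-i} and t(n,m,k) = Σ_{i=1}^{k} r_{k+1-i} C(n-i,m), for b > -1 and nonnegative rewards r_i. Then for n > m > 0 and k > 0, with p = s(n-1,m-1)/s(n,m): v(n,m,k) = p·b·r_k + (1-p)·(v(n-1,m,k-1) - r_k). -/

import Mathlib

/-!
Pascal's rule gives `s(n,m) = s(n-1,m-1) + s(n-1,m)`, so `p` and `1 - p` are the
shares of the two summands, while `t(n,m,k) = t(n-1,m,k-1) + r_k C(n-1,m)`. Clearing the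
denominator, the equation reduces to `s(n-1,m) - b s(n-1,m-1) = C(n-1,m)`, the top term of
`s(n-1,m)`. Positivity of the `s(n,m)` for `m ≤ n`, from Pascal's rule and `s(n,n) = (1+b)^n`,
makes the division legitimate.
-/

noncomputable def s (b : ℝ) (n m : ℕ) : ℝ :=
  ∑ i ∈ Finset.range (m + 1), (n.choose i : ℝ) * b ^ (m - i)

noncomputable def binom (a : ℤ) (c : ℕ) : ℝ :=
  if 0 ≤ a then (a.toNat.choose c : ℝ) else 0

noncomputable def t (r : ℕ → ℝ) (n m k : ℕ) : ℝ :=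
  ∑ i ∈ Finset.Icc 1 k, r (k + 1 - i) * binom ((n : ℤ) - i) m

/-- v(n,m,k) = -t(n,m,k)/s(n,m). -/
noncomputable def v (b : ℝ) (r : ℕ → ℝ) (n m k : ℕ) : ℝ :=
  -t r n m k / s b n m

lemma s_zero_right (b : ℝ) (n : ℕ) : s b n 0 = 1 := by
  simp [s]

lemma s_self (b : ℝ) (n : ℕ) : s b n n = (1 + b) ^ n := by
  simp [s, add_pow, mul_comm]

lemma s_succ_right (b : ℝ) (n m : ℕ) : s b n (m + 1) = b * s b n m + n.choose (m + 1) := by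
  rw [s, Finset.sum_range_succ, s, Finset.mul_sum, Nat.sub_self, pow_zero, mul_one]
  congr 1
  refine Finset.sum_congr rfl fun i hi => ?_
  rw [Nat.sub_add_comm (Finset.mem_range_succ_iff.mp hi), pow_succ]
  ring

lemma s_succ_succ (b : ℝ) (n m : ℕ) : s b (n + 1) (m + 1) = s b n m + s b n (m + 1) := by
  rw [s, Finset.sum_range_succ', s, s, Finset.sum_range_succ' _ (m + 1)]
  simp only [Nat.choose_succ_succ, Nat.cast_add, add_mul, Finset.sum_add_distrib,
    Nat.add_sub_add_right, Nat.choose_zero_right]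
  ring

lemma s_pos {b : ℝ} (hb : -1 < b) {n m : ℕ} (hmn : m ≤ n) : 0 < s b n m := by
  induction n generalizing m with
  | zero => simp [Nat.le_zero.mp hmn, s_zero_right]
  | succ n ih =>
    rcases m with _ | m
    · simp [s_zero_right]
    rcases hmn.eq_or_lt with heq | hlt
    · rw [Nat.succ_inj.mp heq, s_self]
      exact pow_pos (by linarith) _
    · rw [s_succ_succ]
      exact add_pos (ih (by omega)) (ih (by omega))

lemma binom_natCast (n c : ℕ) : binom n c = n.choose c := by
  simp [binom]

lemma t_succ_succ (r : ℕ → ℝ) (n m k : ℕ) :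
    t r (n + 1) m (k + 1) = t r n m k + r (k + 1) * n.choose m := by
  rw [t, t, ← binom_natCast, ← Finset.Ico_add_one_right_eq_Icc, ← Finset.Ico_add_one_right_eq_Icc,
    Finset.sum_eq_sum_Ico_succ_bot (by omega), ← Finset.sum_Ico_add', add_comm]
  congr 1
  · refine Finset.sum_congr rfl fun i _ => ?_
    congr 2 <;> push_cast <;> omega
  · norm_num

theorem stmt_12_general (n m k : ℕ) (b : ℝ) (r : ℕ → ℝ)
    (hb : -1 < b) (hm : 0 < m) (hmn : m < n) (hk : 0 < k)
    (p : ℝ) (hp : p = s b (n - 1) (m - 1) / s b n m) :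
    v b r n m k = p * b * r k + (1 - p) * (v b r (n - 1) m (k - 1) - r k) := by
  obtain ⟨n, rfl⟩ : ∃ n', n = n' + 1 := ⟨n - 1, by omega⟩
  obtain ⟨m, rfl⟩ : ∃ m', m = m' + 1 := ⟨m - 1, by omega⟩
  obtain ⟨k, rfl⟩ : ∃ k', k = k' + 1 := ⟨k - 1, by omega⟩
  have hA : 0 < s b n m := s_pos hb (by omega)
  have hB : 0 < s b n (m + 1) := s_pos hb (by omega)
  simp only [v, Nat.add_sub_cancel, s_succ_succ, t_succ_succ] at hp ⊢
  subst hp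
  have hS : 0 < s b n m + s b n (m + 1) := add_pos hA hB
  field_simp
  rw [s_succ_right]
  ring

/-- Indifference equation for the inspector's equilibrium mixed strategy. -/
theorem stmt_12 (n m k : ℕ) (b : ℝ) (r : ℕ → ℝ)
    (hb : -1 < b) (hm : 0 < m) (hmn : m < n) (hk : 0 < k)
    (hr : ∀ i, 0 ≤ r i)
    (p : ℝ) (hp : p = s b (n - 1) (m - 1) / s b n m) :
    v b r n m k = p * b * r k + (1 - p) * (v b r (n - 1) m (k - 1) - r k) :=
  stmt_12_general n m k b r hb hm hmn hk p hp
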